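/- Let p ≥ 1 and let N* be the real vector space of p×p complex skew-Hermitian matrices with Euclidean norm ‖m‖ = (Tr(m mᴴ))^{1/2} and Lebesgue measure. For every skew-Hermitian n, the L² norm of the cocycle β(n)(m) = (e^{i·Tr(nm)} − 1)·e^{-‖m‖}/‖m‖^{p²/2} satisfies ‖β(n)‖² = ∫_Ω log(1 + (Tr(nω))²/4) dω, where Ω = {ω ∈ N* : ‖ω‖ = 1} is the unit sphere of N* and dω is the surface measure on Ω induced by the Lebesgue measure via polar coordinates dm = r^{p²−1} dr dω. -/

import Mathlib

/-! In polar coordinates `m = r ω` the squared integrand times the Jacobian `r ^ (p² - 1)` is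
`(2 - 2 cos (t r)) e^{-2r} / r` with `t = Tr (n ω)`: the exponent `p²/2` in `f₀` leaves exactly
the factor `1 / r` of the Jacobian. The radial integral is of Frullani type: writing
`e^{-2r} / r = ∫_{s > 2} e^{-s r} ds` and exchanging the integrals, the inner Laplace transform is
`∫_{r > 0} (2 - 2 cos (t r)) e^{-s r} dr = 2 t² / (s (s² + t²))`, and
`∫_{s > 2} 2 t² / (s (s² + t²)) ds = log (1 + t² / 4)`. -/

open MeasureTheory Matrix Set
open scoped ENNReal

noncomputable section

instance (p : ℕ) : MeasurableSpace (Matrix (Fin p) (Fin p) ℂ) :=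
  inferInstanceAs (MeasurableSpace ((Fin p) → (Fin p) → ℂ))

instance (p : ℕ) : BorelSpace (Matrix (Fin p) (Fin p) ℂ) :=
  inferInstanceAs (BorelSpace ((Fin p) → (Fin p) → ℂ))

/-- `N*`, the real vector space of `p×p` complex skew-Hermitian matrices (`mᴴ = -m`),
of real dimension `p²`. -/
abbrev SkewHerm (p : ℕ) : Type := skewAdjoint (Matrix (Fin p) (Fin p) ℂ)

/-- The Euclidean (Frobenius) norm `‖m‖ = (Tr (m mᴴ))^{1/2}` on matrices. -/
def matNorm {p : ℕ} (m : Matrix (Fin p) (Fin p) ℂ) : ℝ :=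
  Real.sqrt ((m * mᴴ).trace.re)

/-- The function `f₀(m) = e^{-‖m‖} / ‖m‖^{p²/2}` on `N*`. -/
def f₀ (p : ℕ) (m : SkewHerm p) : ℝ :=
  Real.exp (-matNorm (m : Matrix (Fin p) (Fin p) ℂ)) /
    matNorm (m : Matrix (Fin p) (Fin p) ℂ) ^ ((p ^ 2 : ℝ) / 2)

/-- The action `m ↦ sᴴ m s` of a matrix `s` on the space `N*` of skew-Hermitian matrices. -/
def conjAct {p : ℕ} (s : Matrix (Fin p) (Fin p) ℂ) (m : SkewHerm p) : SkewHerm p :=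
  ⟨sᴴ * (m : Matrix (Fin p) (Fin p) ℂ) * s, by
    have hm : (m : Matrix (Fin p) (Fin p) ℂ)ᴴ = -(m : Matrix (Fin p) (Fin p) ℂ) := m.2
    simp [skewAdjoint.mem_iff, Matrix.star_eq_conjTranspose, Matrix.conjTranspose_mul,
      Matrix.mul_assoc, hm]⟩

/-- The operator `T_a(s) f (m) = (‖sᴴ m s‖/‖m‖)^{p²/2} · f(sᴴ m s)` associated with the
multiplicative cocycle `a(m) = ‖m‖^{p²/2}`. -/
def Ta (p : ℕ) (s : Matrix (Fin p) (Fin p) ℂ) (f : SkewHerm p → ℂ) : SkewHerm p → ℂ :=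
  fun m =>
    (((matNorm (sᴴ * (m : Matrix (Fin p) (Fin p) ℂ) * s) /
        matNorm (m : Matrix (Fin p) (Fin p) ℂ)) ^ ((p ^ 2 : ℝ) / 2) : ℝ) : ℂ) *
      f (conjAct s m)

section RadialIntegral

open Filter Topology

lemma lintegral_Ioi_ofReal_of_hasDerivAt {a l : ℝ} {g g' : ℝ → ℝ}
    (hderiv : ∀ x ∈ Ici a, HasDerivAt g (g' x) x) (hg'_nonneg : ∀ x ∈ Ioi a, 0 ≤ g' x)
    (hg : Tendsto g atTop (𝓝 l)) :
    ∫⁻ x in Ioi a, ENNReal.ofReal (g' x) = ENNReal.ofReal (l - g a) := by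
  rw [← integral_Ioi_of_hasDerivAt_of_nonneg' hderiv hg'_nonneg hg,
    ofReal_integral_eq_lintegral_ofReal (integrableOn_Ioi_deriv_of_nonneg' hderiv hg'_nonneg hg)
      ((ae_restrict_iff' measurableSet_Ioi).2 (.of_forall hg'_nonneg))]

lemma lintegral_Ioi_exp_neg_mul (a : ℝ) {r : ℝ} (hr : 0 < r) :
    ∫⁻ s in Ioi a, ENNReal.ofReal (Real.exp (-(s * r))) =
      ENNReal.ofReal (Real.exp (-(a * r)) / r) := by
  have h := integral_exp_mul_Ioi (neg_lt_zero.2 hr) a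
  have hint := integrableOn_exp_mul_Ioi (neg_lt_zero.2 hr) a
  simp only [neg_mul, mul_comm r] at h hint
  rw [← ofReal_integral_eq_lintegral_ofReal hint (.of_forall fun _ => (Real.exp_pos _).le), h,
    neg_div_neg_eq]

lemma lintegral_Ioi_two_sub_two_cos_mul_exp (t : ℝ) {s : ℝ} (hs : 0 < s) :
    ∫⁻ r in Ioi (0 : ℝ), ENNReal.ofReal ((2 - 2 * Real.cos (t * r)) * Real.exp (-(s * r))) =
      ENNReal.ofReal (2 * t ^ 2 / (s * (s ^ 2 + t ^ 2))) := by
  set a : ℂ := -s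
  set b : ℂ := -s + t * Complex.I
  have ha : a.re < 0 := by simpa [a] using hs
  have hb : b.re < 0 := by simpa [b] using hs
  have hA := (integrableOn_exp_mul_complex_Ioi ha 0).const_mul 2
  have hB := (integrableOn_exp_mul_complex_Ioi hb 0).const_mul 2
  have hF : IntegrableOn (fun r : ℝ => 2 * Complex.exp (a * r) - 2 * Complex.exp (b * r))
      (Ioi 0) := hA.sub hB
  have hre : (fun r => (2 - 2 * Real.cos (t * r)) * Real.exp (-(s * r))) =
      fun r : ℝ => (2 * Complex.exp (a * r) - 2 * Complex.exp (b * r)).re := by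
    ext r
    simp [a, b, Complex.exp_re]
    ring
  have hnonneg : ∀ r : ℝ, 0 ≤ (2 - 2 * Real.cos (t * r)) * Real.exp (-(s * r)) := fun r =>
    mul_nonneg (by linarith [Real.cos_le_one (t * r)]) (Real.exp_pos _).le
  have hintegral_re := integral_re hF
  simp only [RCLike.re_to_complex] at hintegral_re
  rw [← ofReal_integral_eq_lintegral_ofReal (hre ▸ hF.re) (.of_forall hnonneg), hre,
    hintegral_re, integral_sub hA hB, integral_const_mul, integral_const_mul,
    integral_exp_mul_complex_Ioi ha, integral_exp_mul_complex_Ioi hb]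
  congr 1
  simp [a, b, Complex.div_re, Complex.normSq]
  field_simp
  ring

lemma lintegral_Ioi_two_mul_sq_div_mul_sq_add_sq (t : ℝ) {a : ℝ} (ha : 0 < a) :
    ∫⁻ s in Ioi a, ENNReal.ofReal (2 * t ^ 2 / (s * (s ^ 2 + t ^ 2))) =
      ENNReal.ofReal (Real.log (1 + t ^ 2 / a ^ 2)) := by
  have hderiv : ∀ s ∈ Ici a, HasDerivAt (fun s => -Real.log (1 + t ^ 2 / s ^ 2))
      (2 * t ^ 2 / (s * (s ^ 2 + t ^ 2))) s := by
    intro s hs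
    have hs : 0 < s := ha.trans_le hs
    have h := (((hasDerivAt_const s (t ^ 2)).fun_div (hasDerivAt_pow 2 s)
      (by positivity)).const_add 1).log (by positivity)
    refine h.neg.congr_deriv ?_
    push_cast
    field_simp
    ring
  have hlim : Tendsto (fun s : ℝ => -Real.log (1 + t ^ 2 / s ^ 2)) atTop (𝓝 0) := by
    have h : Tendsto (fun s : ℝ => 1 + t ^ 2 / s ^ 2) atTop (𝓝 1) := by
      simpa using tendsto_const_nhds.add
        ((tendsto_const_nhds (x := t ^ 2)).div_atTop (tendsto_pow_atTop two_ne_zero))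
    simpa using ((Real.continuousAt_log one_ne_zero).tendsto.comp h).neg
  rw [lintegral_Ioi_ofReal_of_hasDerivAt hderiv (fun s hs => by
    have : 0 < s := ha.trans hs; positivity) hlim, zero_sub, neg_neg]

lemma lintegral_Ioi_two_sub_two_cos_mul_exp_div (t : ℝ) {a : ℝ} (ha : 0 < a) :
    ∫⁻ r in Ioi (0 : ℝ), ENNReal.ofReal ((2 - 2 * Real.cos (t * r)) * Real.exp (-(a * r)) / r) =
      ENNReal.ofReal (Real.log (1 + t ^ 2 / a ^ 2)) := by
  calc ∫⁻ r in Ioi (0 : ℝ), ENNReal.ofReal ((2 - 2 * Real.cos (t * r)) * Real.exp (-(a * r)) / r)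
      = ∫⁻ r in Ioi (0 : ℝ), ∫⁻ s in Ioi a,
          ENNReal.ofReal ((2 - 2 * Real.cos (t * r)) * Real.exp (-(s * r))) := by
        refine setLIntegral_congr_fun measurableSet_Ioi fun r (hr : 0 < r) => ?_
        have hcos : 0 ≤ 2 - 2 * Real.cos (t * r) := by linarith [Real.cos_le_one (t * r)]
        simp_rw [ENNReal.ofReal_mul hcos, mul_div_assoc, ENNReal.ofReal_mul hcos,
          lintegral_const_mul' _ _ ENNReal.ofReal_ne_top, lintegral_Ioi_exp_neg_mul a hr]
    _ = ∫⁻ s in Ioi a, ∫⁻ r in Ioi (0 : ℝ),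
          ENNReal.ofReal ((2 - 2 * Real.cos (t * r)) * Real.exp (-(s * r))) :=
        lintegral_lintegral_swap (by fun_prop)
    _ = ∫⁻ s in Ioi a, ENNReal.ofReal (2 * t ^ 2 / (s * (s ^ 2 + t ^ 2))) :=
        setLIntegral_congr_fun measurableSet_Ioi fun s hs =>
          lintegral_Ioi_two_sub_two_cos_mul_exp t (ha.trans hs)
    _ = _ := lintegral_Ioi_two_mul_sq_div_mul_sq_add_sq t ha

end RadialIntegral

def cocycleBeta {p : ℕ} (n : Matrix (Fin p) (Fin p) ℂ) (m : SkewHerm p) : ℂ :=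
  (Complex.exp (Complex.I * (n * (m : Matrix (Fin p) (Fin p) ℂ)).trace) - 1) * (f₀ p m : ℂ)

lemma matNorm_smul {p : ℕ} (r : ℝ) (A : Matrix (Fin p) (Fin p) ℂ) :
    matNorm (r • A) = |r| * matNorm A := by
  have h : (r • A) * (r • A)ᴴ = (r * r) • (A * Aᴴ) := by
    rw [conjTranspose_smul, star_trivial, Matrix.smul_mul, Matrix.mul_smul, smul_smul]
  rw [matNorm, matNorm, h, trace_smul, Complex.smul_re, smul_eq_mul,
    Real.sqrt_mul (mul_self_nonneg r), Real.sqrt_mul_self_eq_abs]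

@[fun_prop]
lemma continuous_matNorm {p : ℕ} : Continuous (matNorm : Matrix (Fin p) (Fin p) ℂ → ℝ) := by
  unfold matNorm
  fun_prop

lemma measurable_cocycleBeta {p : ℕ} (n : Matrix (Fin p) (Fin p) ℂ) :
    Measurable (cocycleBeta n) := by
  unfold cocycleBeta f₀
  fun_prop

lemma ofReal_re_trace_mul_of_conjTranspose_eq_neg {ι : Type*} [Fintype ι] {A B : Matrix ι ι ℂ}
    (hA : Aᴴ = -A) (hB : Bᴴ = -B) : (((A * B).trace.re : ℝ) : ℂ) = (A * B).trace := by
  refine Complex.conj_eq_iff_re.mp ?_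
  rw [starRingEnd_apply, ← trace_conjTranspose, conjTranspose_mul, hA, hB, neg_mul_neg,
    trace_mul_comm]

lemma Complex.norm_exp_I_mul_ofReal_sub_one_sq (x : ℝ) :
    ‖Complex.exp (Complex.I * x) - 1‖ ^ 2 = 2 - 2 * Real.cos x := by
  simp only [Complex.norm_exp_I_mul_ofReal_sub_one, norm_mul, mul_pow, Real.norm_eq_abs, sq_abs]
  rw [Real.sin_sq_eq_half_sub, mul_div_cancel₀ x two_ne_zero]
  ring

lemma f₀_smul_of_matNorm_eq_one {p : ℕ} {ω : SkewHerm p}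
    (hω : matNorm (ω : Matrix (Fin p) (Fin p) ℂ) = 1) {r : ℝ} (hr : 0 < r) :
    f₀ p (r • ω) = Real.exp (-r) / r ^ ((p ^ 2 : ℝ) / 2) := by
  have hnorm : matNorm ((r • ω : SkewHerm p) : Matrix (Fin p) (Fin p) ℂ) = r := by
    rw [skewAdjoint.val_smul, matNorm_smul, hω, abs_of_pos hr, mul_one]
  rw [f₀, hnorm]

lemma f₀_smul_sq_mul_pow {p : ℕ} (hp : 1 ≤ p) {ω : SkewHerm p}
    (hω : matNorm (ω : Matrix (Fin p) (Fin p) ℂ) = 1) {r : ℝ} (hr : 0 < r) :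
    f₀ p (r • ω) ^ 2 * r ^ (p ^ 2 - 1) = Real.exp (-(2 * r)) / r := by
  have hpow : (r ^ ((p ^ 2 : ℝ) / 2)) ^ 2 = r ^ (p ^ 2 - 1) * r := by
    rw [← Real.rpow_natCast _ 2, ← Real.rpow_mul hr.le, Nat.cast_ofNat,
      div_mul_cancel₀ _ two_ne_zero, pow_sub_one_mul (by positivity)]
    exact_mod_cast Real.rpow_natCast r (p ^ 2)
  have hexp : Real.exp (-r) ^ 2 = Real.exp (-(2 * r)) := by
    rw [← Real.exp_nat_mul]
    ring_nf
  rw [f₀_smul_of_matNorm_eq_one hω hr, div_pow, hpow, hexp]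
  field_simp

lemma ofReal_norm_cocycleBeta_smul_sq_mul_pow {p : ℕ} (hp : 1 ≤ p)
    {n : Matrix (Fin p) (Fin p) ℂ} (hn : nᴴ = -n) {ω : SkewHerm p}
    (hω : matNorm (ω : Matrix (Fin p) (Fin p) ℂ) = 1) {r : ℝ} (hr : 0 < r) :
    ENNReal.ofReal (‖cocycleBeta n (r • ω)‖ ^ 2) * ENNReal.ofReal (r ^ (p ^ 2 - 1)) =
      ENNReal.ofReal ((2 - 2 * Real.cos ((n * (ω : Matrix (Fin p) (Fin p) ℂ)).trace.re * r)) *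
        Real.exp (-(2 * r)) / r) := by
  set t := (n * (ω : Matrix (Fin p) (Fin p) ℂ)).trace.re
  have htrace : (n * ((r • ω : SkewHerm p) : Matrix (Fin p) (Fin p) ℂ)).trace = (t * r : ℝ) := by
    rw [skewAdjoint.val_smul, Matrix.mul_smul, trace_smul,
      ← ofReal_re_trace_mul_of_conjTranspose_eq_neg hn ω.2, Complex.real_smul]
    push_cast
    ring
  rw [← ENNReal.ofReal_mul (sq_nonneg _), cocycleBeta, htrace, norm_mul, mul_pow,
    Complex.norm_exp_I_mul_ofReal_sub_one_sq, Complex.norm_real, Real.norm_eq_abs, sq_abs,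
    mul_assoc, f₀_smul_sq_mul_pow hp hω hr, mul_div_assoc]

theorem cocycle_beta_norm_formula_general (p : ℕ) (hp : 1 ≤ p)
    (μ : Measure (SkewHerm p))
    (σ : Measure {ω : SkewHerm p // matNorm (ω : Matrix (Fin p) (Fin p) ℂ) = 1})
    (hpolar : ∀ f : SkewHerm p → ℝ≥0∞, Measurable f →
      ∫⁻ m, f m ∂μ =
        ∫⁻ ω, (∫⁻ r in Ioi (0 : ℝ),
          f (r • (ω : SkewHerm p)) * ENNReal.ofReal (r ^ (p ^ 2 - 1)) ∂volume) ∂σ)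
    (n : Matrix (Fin p) (Fin p) ℂ) (hn : nᴴ = -n) :
    ∫⁻ m, ENNReal.ofReal
        (‖(Complex.exp (Complex.I * (n * (m : Matrix (Fin p) (Fin p) ℂ)).trace) - 1) *
            (f₀ p m : ℂ)‖ ^ 2) ∂μ
      = ∫⁻ ω, ENNReal.ofReal
          (Real.log (1 +
            ((n * ((ω : SkewHerm p) : Matrix (Fin p) (Fin p) ℂ)).trace.re) ^ 2 / 4)) ∂σ := by
  change ∫⁻ m, ENNReal.ofReal (‖cocycleBeta n m‖ ^ 2) ∂μ = _
  rw [hpolar _ ((measurable_cocycleBeta n).norm.pow_const 2).ennreal_ofReal]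
  refine lintegral_congr fun ω => ?_
  rw [setLIntegral_congr_fun measurableSet_Ioi fun r hr =>
      ofReal_norm_cocycleBeta_smul_sq_mul_pow hp hn ω.2 hr,
    lintegral_Ioi_two_sub_two_cos_mul_exp_div _ two_pos]
  norm_num

/-- The squared `L²` norm of the cocycle `β(n)(m) = (e^{i Tr(nm)} − 1) e^{-‖m‖}/‖m‖^{p²/2}`
equals `∫_Ω log (1 + (Tr (n ω))²/4) dω`, where `Ω` is the unit sphere of `N*` and `dω` is
the surface measure induced by the Lebesgue measure via the polar decomposition
`dm = r^{p²−1} dr dω`. -/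
theorem cocycle_beta_norm_formula (p : ℕ) (hp : 1 ≤ p)
    (μ : Measure (SkewHerm p)) [μ.IsAddHaarMeasure]
    (σ : Measure {ω : SkewHerm p // matNorm (ω : Matrix (Fin p) (Fin p) ℂ) = 1})
    (hpolar : ∀ f : SkewHerm p → ℝ≥0∞, Measurable f →
      ∫⁻ m, f m ∂μ =
        ∫⁻ ω, (∫⁻ r in Ioi (0 : ℝ),
          f (r • (ω : SkewHerm p)) * ENNReal.ofReal (r ^ (p ^ 2 - 1)) ∂volume) ∂σ)
    (n : Matrix (Fin p) (Fin p) ℂ) (hn : nᴴ = -n) :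
    ∫⁻ m, ENNReal.ofReal
        (‖(Complex.exp (Complex.I * (n * (m : Matrix (Fin p) (Fin p) ℂ)).trace) - 1) *
            (f₀ p m : ℂ)‖ ^ 2) ∂μ
      = ∫⁻ ω, ENNReal.ofReal
          (Real.log (1 +
            ((n * ((ω : SkewHerm p) : Matrix (Fin p) (Fin p) ℂ)).trace.re) ^ 2 / 4)) ∂σ :=
  cocycle_beta_norm_formula_general p hp μ σ hpolar n hn

end
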